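/- arXiv:2308.11461 — 12 statements merged into one kernel-verified Lean document; each statement's English description precedes it below -/
import Mathlib

section
/- Suppose the instance is WSPT-sorted, i.e. w j * E k ≥ w k * E j whenever j ≤ k in Fin n. Then the identity permutation minimizes the cost: for every permutation σ : Equiv.Perm (Fin n), cost id ≤ cost σ. (Smith's rule: scheduling jobs in nonincreasing order of w j / E j minimizes the total weighted completion time.) -/
/-!
Write the cost as a sum over ordered pairs of jobs `(j, k)` of `w j * E k` when `k` runs no later
than `j`. The diagonal pairs contribute `∑ j, w j * E j` whatever the schedule, and each pair
`j < k` contributes `w j * E k` or `w k * E j` according to which job runs first. The WSPT order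
makes the second of these the smaller one, and the identity schedule realises it on every pair.
-/

open Finset Nat

/-- Expected cost of schedule `σ` (σ j = position of job j):
`cost σ = ∑ j, w j * ∑_{k : σ k ≤ σ j} E k`. -/
noncomputable def cost {n : ℕ} (w E : Fin n → ℝ) (σ : Equiv.Perm (Fin n)) : ℝ :=
  ∑ j, w j * ∑ k ∈ Finset.univ.filter (fun k => σ k ≤ σ j), E k

/-- Expected cost of a randomized schedule `μ`. -/
noncomputable def rcost {n : ℕ} (w E : Fin n → ℝ) (μ : Equiv.Perm (Fin n) → ℝ) : ℝ :=
  ∑ σ, μ σ * cost w E σ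

/-- Probability that randomized schedule `μ` schedules job `j` before job `k`. -/
noncomputable def Pbefore {n : ℕ} (μ : Equiv.Perm (Fin n) → ℝ) (j k : Fin n) : ℝ :=
  ∑ σ ∈ Finset.univ.filter (fun σ : Equiv.Perm (Fin n) => σ j < σ k), μ σ

theorem Fintype.sum_prod_self_eq_sum_diag_add_sum_lt {ι M : Type*} [Fintype ι] [LinearOrder ι]
    [AddCommMonoid M] (f : ι × ι → M) :
    ∑ p, f p = ∑ i, f (i, i) + ∑ p : ι × ι with p.1 < p.2, (f p + f p.swap) := by
  have hdiag : ∑ p : ι × ι with p.1 = p.2, f p = ∑ i, f (i, i) :=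
    sum_nbij' Prod.fst (fun i => (i, i)) (by simp) (by simp) (by aesop) (by simp) (by aesop)
  have hswap : ∑ p : ι × ι with p.2 < p.1, f p = ∑ p : ι × ι with p.1 < p.2, f p.swap :=
    sum_nbij' Prod.swap Prod.swap (by simp) (by simp) (by simp) (by simp) (by simp)
  have hoff : ∑ p : ι × ι with ¬p.1 = p.2, f p
      = ∑ p : ι × ι with p.1 < p.2, f p + ∑ p : ι × ι with p.2 < p.1, f p := by
    rw [← sum_filter_add_sum_filter_not _ (fun p : ι × ι => p.1 < p.2), filter_filter,
      filter_filter]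
    congr 2 <;> ext p <;> simp only [mem_filter, mem_univ, true_and] <;> grind
  rw [← sum_filter_add_sum_filter_not univ (fun p : ι × ι => p.1 = p.2), hdiag, hoff, hswap,
    sum_add_distrib]

noncomputable def costTerm {n : ℕ} (w E : Fin n → ℝ) (τ : Equiv.Perm (Fin n)) (p : Fin n × Fin n) :
    ℝ :=
  if τ p.2 ≤ τ p.1 then w p.1 * E p.2 else 0

lemma cost_eq_sum_costTerm {n : ℕ} (w E : Fin n → ℝ) (τ : Equiv.Perm (Fin n)) :
    cost w E τ = ∑ p, costTerm w E τ p := by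
  simp only [cost, costTerm, Fintype.sum_prod_type, mul_sum, sum_filter, mul_ite, mul_zero]

lemma cost_eq_sum_diag_add_sum_lt {n : ℕ} (w E : Fin n → ℝ) (τ : Equiv.Perm (Fin n)) :
    cost w E τ = ∑ j, w j * E j +
      ∑ p : Fin n × Fin n with p.1 < p.2, (costTerm w E τ p + costTerm w E τ p.swap) := by
  simp [cost_eq_sum_costTerm, Fintype.sum_prod_self_eq_sum_diag_add_sum_lt, costTerm]

lemma costTerm_refl_add_swap_le {n : ℕ} (w E : Fin n → ℝ) (τ : Equiv.Perm (Fin n))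
    {p : Fin n × Fin n} (hlt : p.1 < p.2) (hp : w p.2 * E p.1 ≤ w p.1 * E p.2) :
    costTerm w E (Equiv.refl _) p + costTerm w E (Equiv.refl _) p.swap
      ≤ costTerm w E τ p + costTerm w E τ p.swap := by
  have hτ : τ p.1 ≠ τ p.2 := τ.injective.ne hlt.ne
  simp only [costTerm, Equiv.refl_apply, Prod.fst_swap, Prod.snd_swap, not_le.mpr hlt, hlt.le]
  rcases hτ.lt_or_gt with h | h
  · simp [not_le.mpr h, h.le]
  · simpa [not_le.mpr h, h.le] using hp

theorem stmt_0_general (n : ℕ) (w E : Fin n → ℝ)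
    (hsorted : ∀ j k : Fin n, j ≤ k → w j * E k ≥ w k * E j)
    (σ : Equiv.Perm (Fin n)) :
    cost w E (Equiv.refl (Fin n)) ≤ cost w E σ := by
  rw [cost_eq_sum_diag_add_sum_lt, cost_eq_sum_diag_add_sum_lt]
  refine add_le_add_right (sum_le_sum fun p hp => ?_) _
  have hlt : p.1 < p.2 := (mem_filter.mp hp).2
  exact costTerm_refl_add_swap_le w E σ hlt (hsorted _ _ hlt.le)

/-- Smith's rule: in a WSPT-sorted instance the identity permutation minimizes cost. -/
theorem stmt_0 (n : ℕ) (hn : 1 ≤ n) (w E : Fin n → ℝ)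
    (hw : ∀ j, 0 < w j) (hE : ∀ j, 0 < E j)
    (hsorted : ∀ j k : Fin n, j ≤ k → w j * E k ≥ w k * E j)
    (σ : Equiv.Perm (Fin n)) :
    cost w E (Equiv.refl (Fin n)) ≤ cost w E σ :=
  stmt_0_general n w E hsorted σ
end

section
/- Suppose the instance is WSPT-sorted, i.e. w j * E k ≥ w k * E j whenever j ≤ k in Fin n. Then the order-reversing permutation maximizes the cost: for every permutation σ : Equiv.Perm (Fin n), cost σ ≤ cost rev. (The reverse WSPT order attains the highest possible expected cost H_I.) -/
/-! Write the cost as a sum over ordered pairs `(j, k)` of `w j * E k`, counted when `k` is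
scheduled no later than `j`. For two distinct jobs exactly one of `w j * E k` and `w k * E j` is
counted, and the WSPT order makes the one counted by the reverse order the larger one. -/

open Finset Nat

section PairCost

variable {n : ℕ} (w E : Fin n → ℝ)

noncomputable def pairCost (σ : Equiv.Perm (Fin n)) (j k : Fin n) : ℝ :=
  if σ k ≤ σ j then w j * E k else 0

theorem cost_eq_sum_pairCost (σ : Equiv.Perm (Fin n)) :
    cost w E σ = ∑ j, ∑ k, pairCost w E σ j k := by
  refine Finset.sum_congr rfl fun j _ => ?_
  rw [Finset.mul_sum, Finset.sum_filter]
  rfl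

theorem two_mul_cost_eq_sum_pairCost_add_swap (σ : Equiv.Perm (Fin n)) :
    2 * cost w E σ = ∑ j, ∑ k, (pairCost w E σ j k + pairCost w E σ k j) := by
  simp only [Finset.sum_add_distrib]
  rw [Finset.sum_comm (f := fun j k => pairCost w E σ k j), cost_eq_sum_pairCost]
  ring

theorem cost_le_cost_of_pairCost_le {σ τ : Equiv.Perm (Fin n)}
    (h : ∀ j k, pairCost w E σ j k + pairCost w E σ k j ≤
      pairCost w E τ j k + pairCost w E τ k j) :
    cost w E σ ≤ cost w E τ := by
  have hsum := Finset.sum_le_sum fun j (_ : j ∈ univ) =>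
    Finset.sum_le_sum fun k (_ : k ∈ univ) => h j k
  linarith [two_mul_cost_eq_sum_pairCost_add_swap w E σ,
    two_mul_cost_eq_sum_pairCost_add_swap w E τ]

theorem pairCost_add_swap_of_ne (σ : Equiv.Perm (Fin n)) {j k : Fin n} (hjk : j ≠ k) :
    pairCost w E σ j k + pairCost w E σ k j = if σ j < σ k then w k * E j else w j * E k := by
  rcases (σ.injective.ne hjk).lt_or_gt with h | h
  · simp [pairCost, h, h.le, h.not_ge]
  · simp [pairCost, h.le, h.not_ge, h.not_gt]

theorem pairCost_add_swap_le_revPerm (hsorted : ∀ j k : Fin n, j ≤ k → w j * E k ≥ w k * E j)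
    (σ : Equiv.Perm (Fin n)) (j k : Fin n) :
    pairCost w E σ j k + pairCost w E σ k j ≤
      pairCost w E Fin.revPerm j k + pairCost w E Fin.revPerm k j := by
  obtain rfl | hjk := eq_or_ne j k
  · simp [pairCost]
  rw [pairCost_add_swap_of_ne w E σ hjk, pairCost_add_swap_of_ne w E _ hjk]
  simp only [Fin.revPerm_apply, Fin.rev_lt_rev]
  rcases hjk.lt_or_gt with hlt | hgt
  · simp only [hlt.not_gt, if_false]
    split_ifs
    · exact hsorted j k hlt.le
    · rfl
  · simp only [hgt, if_true]
    split_ifs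
    · rfl
    · exact hsorted k j hgt.le

end PairCost

theorem stmt_1_general (n : ℕ) (w E : Fin n → ℝ)
    (hsorted : ∀ j k : Fin n, j ≤ k → w j * E k ≥ w k * E j)
    (σ : Equiv.Perm (Fin n)) :
    cost w E σ ≤ cost w E (Fin.revPerm : Equiv.Perm (Fin n)) :=
  cost_le_cost_of_pairCost_le w E (pairCost_add_swap_le_revPerm w E hsorted σ)

/-- In a WSPT-sorted instance the order-reversing permutation maximizes cost. -/
theorem stmt_1 (n : ℕ) (hn : 1 ≤ n) (w E : Fin n → ℝ)
    (hw : ∀ j, 0 < w j) (hE : ∀ j, 0 < E j)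
    (hsorted : ∀ j k : Fin n, j ≤ k → w j * E k ≥ w k * E j)
    (σ : Equiv.Perm (Fin n)) :
    cost w E σ ≤ cost w E (Fin.revPerm : Equiv.Perm (Fin n)) :=
  stmt_1_general n w E hsorted σ
end

section
/- Let L := min over all permutations σ of cost σ and H := max over all permutations σ of cost σ. Then the average cost of a uniformly random schedule equals their midpoint: (n !)⁻¹ * ∑ over all σ : Equiv.Perm (Fin n), cost σ = (L + H) / 2. (First part of Lemma 3.1: the uniformly random schedule RND has relative optimality gap exactly 1/2 on every instance.) -/
/-!
Reversing a schedule turns every ordered pair of distinct jobs around, so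
`cost σ + cost (reverse σ)` is the same constant `c` for every `σ`. Hence the reversal of a
cheapest schedule is a most expensive one, giving `L + H = c`, and pairing each schedule with
its reversal shows that the average cost is `c / 2`.
-/

open Finset Nat

section Antipodal

variable {α : Type*} [Fintype α] {g : α → ℝ} {c : ℝ}

theorem inf'_add_sup'_eq_of_add_comp_eq [Nonempty α] (e : α → α) (h : ∀ x, g x + g (e x) = c) :
    univ.inf' univ_nonempty g + univ.sup' univ_nonempty g = c := by
  obtain ⟨xmax, -, hxmax⟩ := exists_mem_eq_sup' univ_nonempty g
  obtain ⟨xmin, -, hxmin⟩ := exists_mem_eq_inf' univ_nonempty g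
  have hle_max : g (e xmin) ≤ univ.sup' univ_nonempty g := le_sup' g (mem_univ _)
  have hmin_le : univ.inf' univ_nonempty g ≤ g (e xmax) := inf'_le g (mem_univ _)
  linarith [h xmin, h xmax]

theorem two_mul_sum_eq_of_add_comp_eq (e : α ≃ α) (h : ∀ x, g x + g (e x) = c) :
    2 * ∑ x, g x = Fintype.card α * c := by
  have hsum_comp : ∑ x, g (e x) = ∑ x, g x := e.sum_comp g
  calc 2 * ∑ x, g x = ∑ x, (g x + g (e x)) := by rw [sum_add_distrib, hsum_comp]; ring
    _ = Fintype.card α * c := by simp [h]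

end Antipodal

theorem ite_le_add_ite_ge {β : Type*} [LinearOrder β] (a b : β) (x : ℝ) :
    (if a ≤ b then x else 0) + (if b ≤ a then x else 0) = x + if a = b then x else 0 := by
  rcases lt_trichotomy a b with hab | rfl | hab
  · simp [hab.le, hab.not_ge, hab.ne]
  · simp
  · simp [hab.le, hab.not_ge, hab.ne']

theorem cost_eq_sum_sum_ite {n : ℕ} (w E : Fin n → ℝ) (σ : Equiv.Perm (Fin n)) :
    cost w E σ = ∑ j, ∑ k, if σ k ≤ σ j then w j * E k else 0 := by
  simp only [cost, mul_sum, sum_filter, mul_ite, mul_zero]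

theorem cost_add_cost_trans_revPerm {n : ℕ} (w E : Fin n → ℝ) (σ : Equiv.Perm (Fin n)) :
    cost w E σ + cost w E (σ.trans Fin.revPerm) =
      (∑ j, ∑ k, w j * E k) + ∑ j, w j * E j := by
  have hdiag : ∑ j, w j * E j = ∑ j, ∑ k, if σ k = σ j then w j * E k else 0 := by
    simp [σ.injective.eq_iff]
  simp only [cost_eq_sum_sum_ite, hdiag, Equiv.trans_apply, Fin.revPerm_apply, Fin.rev_le_rev,
    ← sum_add_distrib, ite_le_add_ite_ge]

theorem stmt_2_general (n : ℕ) (w E : Fin n → ℝ)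
    (L H : ℝ)
    (hL : L = Finset.univ.inf' Finset.univ_nonempty (cost w E))
    (hH : H = Finset.univ.sup' Finset.univ_nonempty (cost w E)) :
    ((n ! : ℝ))⁻¹ * ∑ σ : Equiv.Perm (Fin n), cost w E σ = (L + H) / 2 := by
  have hrev := cost_add_cost_trans_revPerm w E
  have hLH : L + H = _ := hL ▸ hH ▸ inf'_add_sup'_eq_of_add_comp_eq _ hrev
  have hsum := two_mul_sum_eq_of_add_comp_eq (Equiv.mulLeft Fin.revPerm) hrev
  rw [Fintype.card_perm, Fintype.card_fin] at hsum
  rw [hLH]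
  field_simp
  linarith

/-- The uniformly random schedule's expected cost is the midpoint of the minimal
and maximal cost. -/
theorem stmt_2 (n : ℕ) (hn : 1 ≤ n) (w E : Fin n → ℝ)
    (hw : ∀ j, 0 < w j) (hE : ∀ j, 0 < E j)
    (L H : ℝ)
    (hL : L = Finset.univ.inf' Finset.univ_nonempty (cost w E))
    (hH : H = Finset.univ.sup' Finset.univ_nonempty (cost w E)) :
    ((n ! : ℝ))⁻¹ * ∑ σ : Equiv.Perm (Fin n), cost w E σ = (L + H) / 2 :=
  stmt_2_general n w E L H hL hH
end

section
/- Suppose the instance is WSPT-sorted, i.e. w j * E k ≥ w k * E j whenever j ≤ k in Fin n. Then the gap between the maximal and minimal cost equals the sum of the pairwise exchange costs: cost rev - cost id = ∑ over pairs j < k in Fin n, (w j * E k - w k * E j). -/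
open Finset Nat

/-!
Under `id` job `j` pays for the jobs `k ≤ j`, under `rev` for the jobs `k ≥ j`. In the difference
the diagonal terms `w j * E j` cancel, and swapping the order of summation in the sum over `k < j`
pairs each remaining term `w j * E k` with `w k * E j`, over `j < k`.
-/

namespace Finset

variable {α M : Type*} [Fintype α] [LinearOrder α] [AddCommGroup M]

theorem sum_sum_filter_le_comm (f : α → α → M) :
    ∑ j, ∑ k ∈ univ.filter (fun k => k ≤ j), f j k
      = ∑ j, ∑ k ∈ univ.filter (fun k => j ≤ k), f k j := by
  simp only [sum_filter]
  exact sum_comm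

theorem sum_sum_filter_ge_sub_sum_sum_filter_le (f : α → α → M) :
    ∑ j, ∑ k ∈ univ.filter (fun k => j ≤ k), f j k
        - ∑ j, ∑ k ∈ univ.filter (fun k => k ≤ j), f j k
      = ∑ j, ∑ k ∈ univ.filter (fun k => j < k), (f j k - f k j) := by
  rw [sum_sum_filter_le_comm, ← sum_sub_distrib]
  refine sum_congr rfl fun j _ => ?_
  have hdiag : univ.filter (fun k => j ≤ k) = insert j (univ.filter (fun k => j < k)) := by
    ext k
    simp [le_iff_eq_or_lt, eq_comm]
  rw [← sum_sub_distrib, hdiag, sum_insert (by simp), sub_self, zero_add]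

end Finset

section

variable {n : ℕ} (w E : Fin n → ℝ)

theorem cost_refl :
    cost w E (Equiv.refl (Fin n)) = ∑ j, w j * ∑ k ∈ univ.filter (fun k => k ≤ j), E k :=
  rfl

theorem cost_revPerm :
    cost w E Fin.revPerm = ∑ j, w j * ∑ k ∈ univ.filter (fun k => j ≤ k), E k := by
  simp only [cost, Fin.revPerm_apply, Fin.rev_le_rev]

end

theorem stmt_3_general (n : ℕ) (w E : Fin n → ℝ) :
    cost w E (Fin.revPerm : Equiv.Perm (Fin n)) - cost w E (Equiv.refl (Fin n))
      = ∑ j, ∑ k ∈ Finset.univ.filter (fun k => j < k), (w j * E k - w k * E j) := by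
  rw [cost_revPerm, cost_refl]
  simp only [mul_sum]
  exact sum_sum_filter_ge_sub_sum_sum_filter_le fun j k => w j * E k

/-- The gap between maximal and minimal cost is the sum of pairwise exchange costs. -/
theorem stmt_3 (n : ℕ) (hn : 1 ≤ n) (w E : Fin n → ℝ)
    (hw : ∀ j, 0 < w j) (hE : ∀ j, 0 < E j)
    (hsorted : ∀ j k : Fin n, j ≤ k → w j * E k ≥ w k * E j) :
    cost w E (Fin.revPerm : Equiv.Perm (Fin n)) - cost w E (Equiv.refl (Fin n))
      = ∑ j, ∑ k ∈ Finset.univ.filter (fun k => j < k), (w j * E k - w k * E j) :=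
  stmt_3_general n w E
end

section
/- For any randomized schedule μ, the expected cost of μ in excess of the cost of the identity order decomposes over incorrectly ordered pairs: cost μ - cost id = ∑ over pairs j < k in Fin n, P_μ(k→j) * (w j * E k - w k * E j), where P_μ(k→j) = ∑ σ in {σ | σ k < σ j}, μ σ is the probability that μ schedules k before j. (Lemma 4.2.) -/
open Finset Nat

/-!
Adding the diagonal terms `w j * E j`, the cost of `σ` is the sum of `w j * E k` over the pairs
with `k` scheduled before `j`. A pair `j < k` thus contributes `w j * E k` if `σ` inverts it and
`w k * E j` otherwise, so relative to the identity only inverted pairs contribute, each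
`w j * E k - w k * E j`. Since `∑ σ, μ σ = 1`, subtracting `cost id` commutes with averaging over
`μ`, which turns the indicator of an inversion into `Pbefore μ k j`.
-/

theorem Finset.sum_sum_filter_lt_comp_eq {ι α M : Type*} [Fintype ι] [LinearOrder ι]
    [LinearOrder α] [AddCommMonoid M] {p : ι → α} (hp : Function.Injective p)
    (f : ι → ι → M) :
    ∑ j, ∑ k ∈ univ.filter (fun k => p k < p j), f j k
      = ∑ j, ∑ k ∈ univ.filter (fun k => j < k), if p k < p j then f j k else f k j := by
  have hpair : ∀ j k, j < k → (if p k < p j then f j k else f k j)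
      = (if p k < p j then f j k else 0) + if p j < p k then f k j else 0 := by
    intro j k hjk
    rcases (hp.ne hjk.ne).lt_or_gt with h | h
    · simp [h, h.not_gt]
    · simp [h, h.not_gt]
  have hsplit : ∀ j k, (if p k < p j then f j k else 0)
      = (if j < k then (if p k < p j then f j k else 0) else 0)
        + if k < j then (if p k < p j then f j k else 0) else 0 := by
    intro j k
    rcases lt_trichotomy j k with h | rfl | h
    · simp [h, h.not_gt]
    · simp
    · simp [h, h.not_gt]
  simp only [sum_filter]
  calc ∑ j, ∑ k, (if p k < p j then f j k else 0)
      = ∑ j, ∑ k, (if j < k then (if p k < p j then f j k else 0) else 0)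
        + ∑ j, ∑ k, (if j < k then (if p j < p k then f k j else 0) else 0) := by
        rw [sum_comm (f := fun j k => if j < k then (if p j < p k then f k j else 0) else 0),
          ← sum_add_distrib]
        simp only [← sum_add_distrib, ← hsplit]
    _ = ∑ j, ∑ k, if j < k then (if p k < p j then f j k else f k j) else 0 := by
        rw [← sum_add_distrib]
        refine sum_congr rfl fun j _ => ?_
        rw [← sum_add_distrib]
        refine sum_congr rfl fun k _ => ?_
        by_cases hjk : j < k
        · simp only [hjk, if_true, hpair j k hjk]
        · simp only [hjk, if_false, add_zero]

theorem cost_eq_sum_add_sum_lt {n : ℕ} (w E : Fin n → ℝ) (σ : Equiv.Perm (Fin n)) :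
    cost w E σ = ∑ j, w j * E j + ∑ j, ∑ k ∈ univ.filter (fun k => σ k < σ j), w j * E k := by
  have hle : ∀ j,
      univ.filter (fun k => σ k ≤ σ j) = insert j (univ.filter (fun k => σ k < σ j)) := by
    intro j
    ext k
    simp [le_iff_lt_or_eq, σ.injective.eq_iff, or_comm]
  simp only [cost, ← sum_add_distrib, ← mul_sum, ← mul_add, hle]
  refine sum_congr rfl fun j _ => ?_
  rw [sum_insert (by simp)]

theorem cost_sub_cost_refl {n : ℕ} (w E : Fin n → ℝ) (σ : Equiv.Perm (Fin n)) :
    cost w E σ - cost w E (Equiv.refl (Fin n))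
      = ∑ j, ∑ k ∈ univ.filter (fun k => j < k),
          if σ k < σ j then w j * E k - w k * E j else 0 := by
  rw [cost_eq_sum_add_sum_lt, cost_eq_sum_add_sum_lt,
    sum_sum_filter_lt_comp_eq σ.injective, sum_sum_filter_lt_comp_eq (Equiv.refl _).injective,
    add_sub_add_left_eq_sub, ← sum_sub_distrib]
  refine sum_congr rfl fun j _ => ?_
  rw [← sum_sub_distrib]
  refine sum_congr rfl fun k hk => ?_
  have hjk : j < k := (mem_filter.mp hk).2
  simp only [Equiv.refl_apply, hjk.not_gt, if_false]
  split_ifs <;> simp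

theorem stmt_4_general (n : ℕ) (w E : Fin n → ℝ)
    (μ : Equiv.Perm (Fin n) → ℝ)
    (hμ1 : ∑ σ, μ σ = 1) :
    rcost w E μ - cost w E (Equiv.refl (Fin n))
      = ∑ j, ∑ k ∈ Finset.univ.filter (fun k => j < k),
          Pbefore μ k j * (w j * E k - w k * E j) := by
  calc rcost w E μ - cost w E (Equiv.refl (Fin n))
      = ∑ σ, μ σ * (cost w E σ - cost w E (Equiv.refl (Fin n))) := by
        simp only [rcost, mul_sub, sum_sub_distrib, ← sum_mul, hμ1, one_mul]
    _ = _ := by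
        simp only [cost_sub_cost_refl, mul_sum]
        rw [sum_comm]
        refine sum_congr rfl fun j _ => ?_
        rw [sum_comm]
        refine sum_congr rfl fun k _ => ?_
        simp only [Pbefore, sum_filter, sum_mul, mul_ite, ite_mul, mul_zero, zero_mul]

/-- Lemma 4.2: the expected cost of a randomized schedule in excess of the cost of
the identity order decomposes over incorrectly ordered pairs. -/
theorem stmt_4 (n : ℕ) (hn : 1 ≤ n) (w E : Fin n → ℝ)
    (hw : ∀ j, 0 < w j) (hE : ∀ j, 0 < E j)
    (μ : Equiv.Perm (Fin n) → ℝ)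
    (hμ0 : ∀ σ, 0 ≤ μ σ) (hμ1 : ∑ σ, μ σ = 1) :
    rcost w E μ - cost w E (Equiv.refl (Fin n))
      = ∑ j, ∑ k ∈ Finset.univ.filter (fun k => j < k),
          Pbefore μ k j * (w j * E k - w k * E j) :=
  stmt_4_general n w E μ hμ1
end

section
/- Suppose the instance is WSPT-sorted, i.e. w j * E k ≥ w k * E j whenever j ≤ k in Fin n. If a randomized schedule μ satisfies P_μ(j→k) ≥ 1/2 for every pair j < k with w j * E k > w k * E j, then μ is at least as good as the uniformly random schedule: cost μ ≤ (n !)⁻¹ * ∑ over all σ : Equiv.Perm (Fin n), cost σ. -/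
open Finset Nat

theorem Fintype.sum_prod_eq_sum_diag_add_sum_lt {α M : Type*} [Fintype α] [LinearOrder α]
    [AddCommMonoid M] (f : α → α → M) :
    ∑ p : α × α, f p.1 p.2 =
      ∑ a, f a a + ∑ p : α × α with p.1 < p.2, (f p.1 p.2 + f p.2 p.1) := by
  have hdiag : ∑ p : α × α with p.1 = p.2, f p.1 p.2 = ∑ a, f a a := by
    simp [sum_filter, Fintype.sum_prod_type]
  have hswap : ∑ p : α × α with p.2 < p.1, f p.1 p.2 = ∑ p : α × α with p.1 < p.2, f p.2 p.1 :=
    Finset.sum_equiv (Equiv.prodComm α α) (by simp) (by simp)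
  rw [← sum_filter_add_sum_filter_not univ (fun p : α × α => p.1 = p.2),
    ← sum_filter_add_sum_filter_not (univ.filter fun p : α × α => ¬p.1 = p.2) (fun p => p.1 < p.2),
    filter_filter, filter_filter, sum_add_distrib, hdiag, ← hswap]
  congr 2 <;> exact Finset.sum_congr (filter_congr fun p _ => by grind) fun _ _ => rfl

section Scheduling

variable {n : ℕ}

lemma cost_eq_sum_prod (w E : Fin n → ℝ) (σ : Equiv.Perm (Fin n)) :
    cost w E σ = ∑ p : Fin n × Fin n, if σ p.2 ≤ σ p.1 then w p.1 * E p.2 else 0 := by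
  simp only [cost, mul_sum, sum_filter, mul_ite, mul_zero, Fintype.sum_prod_type]

lemma ite_le_add_ite_le_of_ne (σ : Equiv.Perm (Fin n)) {j k : Fin n} (hjk : j ≠ k) (a b : ℝ) :
    ((if σ k ≤ σ j then a else 0) + if σ j ≤ σ k then b else 0) =
      a + (b - a) * if σ j < σ k then 1 else 0 := by
  rcases (σ.injective.ne hjk).lt_or_gt with h | h
  · simp [h, h.le, h.not_ge]
  · simp [h.le, h.not_ge, h.asymm]

lemma cost_eq_sum_lt (w E : Fin n → ℝ) (σ : Equiv.Perm (Fin n)) :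
    cost w E σ = ∑ j, w j * E j + ∑ p : Fin n × Fin n with p.1 < p.2,
      (w p.1 * E p.2 + (w p.2 * E p.1 - w p.1 * E p.2) * if σ p.1 < σ p.2 then 1 else 0) := by
  rw [cost_eq_sum_prod, Fintype.sum_prod_eq_sum_diag_add_sum_lt (fun j k =>
    if σ k ≤ σ j then w j * E k else 0)]
  simp only [le_refl, if_true]
  congr 1
  refine Finset.sum_congr rfl fun p hp => ?_
  exact ite_le_add_ite_le_of_ne σ (mem_filter.1 hp).2.ne _ _

lemma rcost_eq (w E : Fin n → ℝ) (μ : Equiv.Perm (Fin n) → ℝ) :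
    rcost w E μ =
      (∑ σ, μ σ) * (∑ j, w j * E j + ∑ p : Fin n × Fin n with p.1 < p.2, w p.1 * E p.2) +
        ∑ p : Fin n × Fin n with p.1 < p.2, (w p.2 * E p.1 - w p.1 * E p.2) * Pbefore μ p.1 p.2 := by
  simp only [rcost, cost_eq_sum_lt, mul_add, mul_sum, sum_add_distrib, ← add_assoc, sum_mul]
  rw [Finset.sum_comm (s := univ), Finset.sum_comm (s := univ) (t := univ.filter _),
    Finset.sum_comm (s := univ) (t := univ.filter _)]
  congr 1
  refine Finset.sum_congr rfl fun p _ => ?_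
  rw [Pbefore, sum_filter, mul_sum]
  exact Finset.sum_congr rfl fun σ _ => by split_ifs <;> ring

lemma Pbefore_add_Pbefore (μ : Equiv.Perm (Fin n) → ℝ) {j k : Fin n} (hjk : j ≠ k) :
    Pbefore μ j k + Pbefore μ k j = ∑ σ, μ σ := by
  rw [Pbefore, Pbefore,
    ← sum_filter_add_sum_filter_not univ (fun σ : Equiv.Perm (Fin n) => σ j < σ k)]
  congr 1
  exact Finset.sum_congr (filter_congr fun σ _ => by
    rw [not_lt, (σ.injective.ne hjk.symm).le_iff_lt]) fun _ _ => rfl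

lemma Pbefore_const_comm (c : ℝ) (j k : Fin n) :
    Pbefore (fun _ => c) j k = Pbefore (fun _ => c) k j := by
  simp only [Pbefore, sum_const]
  congr 1
  exact card_equiv (Equiv.mulRight (Equiv.swap j k)) (by simp)

end Scheduling

theorem stmt_6_general (n : ℕ) (w E : Fin n → ℝ)
    (hsorted : ∀ j k : Fin n, j ≤ k → w j * E k ≥ w k * E j)
    (μ : Equiv.Perm (Fin n) → ℝ)
    (hμ1 : ∑ σ, μ σ = 1)
    (hP : ∀ j k : Fin n, j < k → w j * E k > w k * E j → Pbefore μ j k ≥ 1 / 2) :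
    rcost w E μ ≤ ((n ! : ℝ))⁻¹ * ∑ σ : Equiv.Perm (Fin n), cost w E σ := by
  set unif : Equiv.Perm (Fin n) → ℝ := fun _ => ((n ! : ℝ))⁻¹
  have hunif : ∑ σ, unif σ = 1 := by
    simp [unif, Fintype.card_perm, (Nat.cast_pos.2 n.factorial_pos).ne']
  have hunif_half : ∀ j k : Fin n, j ≠ k → Pbefore unif j k = 1 / 2 := fun j k hjk => by
    linarith [Pbefore_add_Pbefore unif hjk, Pbefore_const_comm ((n ! : ℝ))⁻¹ j k]
  have hrhs : ((n ! : ℝ))⁻¹ * ∑ σ, cost w E σ = rcost w E unif := mul_sum _ _ _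
  rw [hrhs, rcost_eq, rcost_eq, hμ1, hunif, add_le_add_iff_left]
  refine sum_le_sum fun p hp => ?_
  have hlt := (mem_filter.1 hp).2
  rw [hunif_half _ _ hlt.ne]
  rcases (hsorted _ _ hlt.le).lt_or_eq with hgt | heq
  · exact mul_le_mul_of_nonpos_left (hP _ _ hlt hgt) (by linarith)
  · rw [heq, sub_self, zero_mul, zero_mul]

/-- If every incorrectly ordered pair is scheduled correctly with probability at
least `1/2`, the randomized schedule beats the uniformly random schedule. -/
theorem stmt_6 (n : ℕ) (hn : 1 ≤ n) (w E : Fin n → ℝ)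
    (hw : ∀ j, 0 < w j) (hE : ∀ j, 0 < E j)
    (hsorted : ∀ j k : Fin n, j ≤ k → w j * E k ≥ w k * E j)
    (μ : Equiv.Perm (Fin n) → ℝ)
    (hμ0 : ∀ σ, 0 ≤ μ σ) (hμ1 : ∑ σ, μ σ = 1)
    (hP : ∀ j k : Fin n, j < k → w j * E k > w k * E j → Pbefore μ j k ≥ 1 / 2) :
    rcost w E μ ≤ ((n ! : ℝ))⁻¹ * ∑ σ : Equiv.Perm (Fin n), cost w E σ :=
  stmt_6_general n w E hsorted μ hμ1 hP
end

section
/- Suppose the instance is WSPT-sorted with cost id < cost rev, and let L := cost id and H := cost rev. For every randomized schedule μ: cost μ ≤ (n !)⁻¹ * ∑ over all σ, cost σ if and only if (cost μ - L) / (H - L) ≤ 1/2. (Second part of Lemma 3.1: beating the uniformly random schedule is equivalent to having relative optimality gap at most that of RND.) -/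
open Finset Nat

/-
Reversing a schedule swaps "before" and "after", so for every job `j` the jobs counted in
`cost σ` and in `cost (rev ∘ σ)` together make up all jobs, with `j` itself counted twice.
Hence `cost σ + cost (rev ∘ σ)` is a constant, equal to `L + H`, and since `σ ↦ rev ∘ σ` is a
bijection of the permutations, the uniformly random schedule costs exactly `(L + H) / 2`, i.e.
has relative gap `1 / 2`.
-/

lemma sum_filter_le_add_sum_filter_ge {ι α M : Type*} [Fintype ι] [DecidableEq ι]
    [LinearOrder α] [AddCommMonoid M] {f : ι → α} (hf : Function.Injective f) (E : ι → M)
    (j : ι) :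
    ∑ k ∈ univ.filter (fun k => f k ≤ f j), E k + ∑ k ∈ univ.filter (fun k => f j ≤ f k), E k =
      E j + ∑ k, E k := by
  have hsplit : ∀ k, ((if f k ≤ f j then E k else 0) + if f j ≤ f k then E k else 0) =
      (if j = k then E k else 0) + E k := by
    intro k
    rcases lt_trichotomy (f k) (f j) with h | h | h
    · simp [h.le, h.not_ge, if_neg (h.ne' ∘ congrArg f)]
    · simp [hf h]
    · simp [h.le, h.not_ge, if_neg (h.ne ∘ congrArg f)]
  rw [sum_filter, sum_filter, ← sum_add_distrib, sum_congr rfl fun k _ => hsplit k,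
    sum_add_distrib, sum_ite_eq]
  simp

lemma cost_add_cost_revPerm_mul {n : ℕ} (w E : Fin n → ℝ) (σ : Equiv.Perm (Fin n)) :
    cost w E σ + cost w E (Fin.revPerm * σ) = ∑ j, w j * (E j + ∑ k, E k) := by
  simp only [cost, Equiv.Perm.mul_apply, Fin.revPerm_apply, Fin.rev_le_rev, ← sum_add_distrib,
    ← mul_add, sum_filter_le_add_sum_filter_ge σ.injective]

lemma two_mul_sum_cost {n : ℕ} (w E : Fin n → ℝ) :
    2 * ∑ σ : Equiv.Perm (Fin n), cost w E σ =
      n ! * (cost w E (Equiv.refl (Fin n)) + cost w E Fin.revPerm) := by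
  have hrev : ∑ σ : Equiv.Perm (Fin n), cost w E (Fin.revPerm * σ) = ∑ σ, cost w E σ :=
    Fintype.sum_bijective _ (Group.mulLeft_bijective _) _ _ fun _ => rfl
  calc 2 * ∑ σ : Equiv.Perm (Fin n), cost w E σ
      = ∑ σ : Equiv.Perm (Fin n), (cost w E σ + cost w E (Fin.revPerm * σ)) := by
        rw [sum_add_distrib, hrev, two_mul]
    _ = n ! * (cost w E 1 + cost w E (Fin.revPerm * 1)) := by
        simp only [cost_add_cost_revPerm_mul, sum_const, Finset.card_univ, Fintype.card_perm,
          Fintype.card_fin, nsmul_eq_mul]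
    _ = n ! * (cost w E (Equiv.refl (Fin n)) + cost w E Fin.revPerm) := by
        rw [mul_one]; rfl

theorem stmt_7_general (n : ℕ) (w E : Fin n → ℝ)
    (L H : ℝ) (hL : L = cost w E (Equiv.refl (Fin n)))
    (hH : H = cost w E (Fin.revPerm : Equiv.Perm (Fin n)))
    (hLH : L < H)
    (μ : Equiv.Perm (Fin n) → ℝ) :
    rcost w E μ ≤ ((n ! : ℝ))⁻¹ * ∑ σ : Equiv.Perm (Fin n), cost w E σ ↔
      (rcost w E μ - L) / (H - L) ≤ 1 / 2 := by
  have havg : ((n ! : ℝ))⁻¹ * ∑ σ : Equiv.Perm (Fin n), cost w E σ = (L + H) / 2 := by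
    have hsum := two_mul_sum_cost w E
    rw [← hL, ← hH] at hsum
    field_simp
    linarith
  rw [havg, div_le_div_iff₀ (sub_pos.mpr hLH) two_pos]
  constructor <;> intro h <;> linarith

/-- Second part of Lemma 3.1: beating the uniformly random schedule is equivalent
to having relative optimality gap at most `1/2`. -/
theorem stmt_7 (n : ℕ) (hn : 1 ≤ n) (w E : Fin n → ℝ)
    (hw : ∀ j, 0 < w j) (hE : ∀ j, 0 < E j)
    (hsorted : ∀ j k : Fin n, j ≤ k → w j * E k ≥ w k * E j)
    (L H : ℝ) (hL : L = cost w E (Equiv.refl (Fin n)))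
    (hH : H = cost w E (Fin.revPerm : Equiv.Perm (Fin n)))
    (hLH : L < H)
    (μ : Equiv.Perm (Fin n) → ℝ)
    (hμ0 : ∀ σ, 0 ≤ μ σ) (hμ1 : ∑ σ, μ σ = 1) :
    rcost w E μ ≤ ((n ! : ℝ))⁻¹ * ∑ σ : Equiv.Perm (Fin n), cost w E σ ↔
      (rcost w E μ - L) / (H - L) ≤ 1 / 2 :=
  stmt_7_general n w E L H hL hH hLH μ
end

section
/- Let X and Y be independent random variables on a probability space (Ω, ℙ). Suppose X has density f which vanishes almost everywhere on (-∞, 0) and is symmetric about a > 0 (f (a - t) = f (a + t) for all t), and Y has density g which vanishes almost everywhere on (-∞, 0) and is symmetric about b > 0 (g (b - t) = g (b + t) for all t). Let u, v > 0 be reals with u * b ≥ v * a. Then ℙ {ω | v * X ω ≤ u * Y ω} ≥ 1/2. (Key pairwise inequality behind Theorem 5.2: for jobs with symmetric processing time distributions, SAM schedules any pair of jobs in the order of nonincreasing weight over mean, w_j/E_j ≥ w_k/E_k, with probability at least 1/2; here u = w_j, v = w_k, a = E_j, b = E_k.) -/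
open MeasureTheory

/-- `X` has density `f` (with respect to Lebesgue measure) under `ℙ`. -/
def HasDensity {Ω : Type*} [MeasurableSpace Ω] (ℙ : Measure Ω) (X : Ω → ℝ) (f : ℝ → ℝ) : Prop :=
  (∀ x, 0 ≤ f x) ∧ Measurable f ∧ (∫ x, f x = 1) ∧
    Measure.map X ℙ = volume.withDensity (fun x => ENNReal.ofReal (f x))

/-- `f` vanishes (Lebesgue-) almost everywhere on the set `s`. -/
def VanishesAEOn (f : ℝ → ℝ) (s : Set ℝ) : Prop :=
  ∀ᵐ x ∂(volume.restrict s), f x = 0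

/-! The reflection `(x, y) ↦ (2a - x, 2b - y)` preserves the joint law of `(X, Y)`, which is the
product of two laws symmetric about `a` and `b`, and it maps the event `v X > u Y` into the event
`v X ≤ u Y` because `v a ≤ u b`. The latter event therefore has probability at least that of its
complement. -/

lemma ENNReal.half_le_of_add_eq_one_of_le {x y : ENNReal} (hxy : x + y = 1) (hyx : y ≤ x) :
    1 / 2 ≤ x := by
  rw [ENNReal.div_le_iff (by norm_num) (by norm_num), ← hxy, mul_two]
  gcongr

lemma MeasureTheory.MeasurePreserving.half_le_of_compl_subset_preimage {α : Type*}
    [MeasurableSpace α] {μ : Measure α} [IsProbabilityMeasure μ] {T : α → α}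
    (hT : MeasurePreserving T μ μ) {A : Set α} (hA : MeasurableSet A) (hAT : Aᶜ ⊆ T ⁻¹' A) :
    1 / 2 ≤ μ A :=
  ENNReal.half_le_of_add_eq_one_of_le (prob_add_prob_compl hA)
    ((measure_mono hAT).trans_eq (hT.measure_preimage hA.nullMeasurableSet))

lemma MeasureTheory.MeasurePreserving.withDensity {α : Type*} [MeasurableSpace α]
    {μ : Measure α} {T : α → α} (hT : MeasurePreserving T μ μ) {h : α → ENNReal}
    (hh : Measurable h) (hhT : ∀ x, h (T x) = h x) :
    MeasurePreserving T (μ.withDensity h) (μ.withDensity h) := by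
  refine ⟨hT.measurable, Measure.ext fun s hs => ?_⟩
  rw [Measure.map_apply hT.measurable hs, withDensity_apply _ (hT.measurable hs),
    withDensity_apply _ hs, ← hT.setLIntegral_comp_preimage hs hh]
  simp only [hhT]

lemma measurePreserving_reflect_withDensity {h : ℝ → ENNReal} (hh : Measurable h) {a : ℝ}
    (hsym : ∀ t, h (a - t) = h (a + t)) :
    MeasurePreserving (fun x => 2 * a - x) (volume.withDensity h) (volume.withDensity h) :=
  (Measure.measurePreserving_sub_left volume (2 * a)).withDensity hh fun x => by
    simpa [two_mul, sub_sub_eq_add_sub, add_sub_assoc] using hsym (x - a)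

lemma HasDensity.measurePreserving_reflect {Ω : Type*} [MeasurableSpace Ω] {ℙ : Measure Ω}
    {X : Ω → ℝ} {f : ℝ → ℝ} (hf : HasDensity ℙ X f) {a : ℝ}
    (hsym : ∀ t, f (a - t) = f (a + t)) :
    MeasurePreserving (fun x => 2 * a - x) (ℙ.map X) (ℙ.map X) := by
  obtain ⟨-, hfm, -, hmap⟩ := hf
  rw [hmap]
  exact measurePreserving_reflect_withDensity (ENNReal.measurable_ofReal.comp hfm)
    fun t => congrArg ENNReal.ofReal (hsym t)

theorem stmt_10_general {Ω : Type*} [MeasurableSpace Ω] (ℙ : Measure Ω) [IsProbabilityMeasure ℙ]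
    (X Y : Ω → ℝ) (hX : Measurable X) (hY : Measurable Y)
    (hindep : ProbabilityTheory.IndepFun X Y ℙ)
    (f g : ℝ → ℝ) (hf : HasDensity ℙ X f) (hg : HasDensity ℙ Y g)
    (a b : ℝ)
    (hfsym : ∀ t : ℝ, f (a - t) = f (a + t))
    (hgsym : ∀ t : ℝ, g (b - t) = g (b + t))
    (u v : ℝ) (huv : u * b ≥ v * a) :
    1 / 2 ≤ ℙ {ω | v * X ω ≤ u * Y ω} := by
  have : IsProbabilityMeasure (ℙ.map X) := Measure.isProbabilityMeasure_map hX.aemeasurable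
  have : IsProbabilityMeasure (ℙ.map Y) := Measure.isProbabilityMeasure_map hY.aemeasurable
  set A : Set (ℝ × ℝ) := {p | v * p.1 ≤ u * p.2}
  have hA : MeasurableSet A := measurableSet_le (by fun_prop) (by fun_prop)
  have hlaw : ℙ {ω | v * X ω ≤ u * Y ω} = ((ℙ.map X).prod (ℙ.map Y)) A := by
    rw [← hindep.map_prod_eq_prod_map_map hX.aemeasurable hY.aemeasurable,
      Measure.map_apply (hX.prodMk hY) hA]
    rfl
  rw [hlaw]
  refine ((hf.measurePreserving_reflect hfsym).prod
    (hg.measurePreserving_reflect hgsym)).half_le_of_compl_subset_preimage hA ?_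
  rintro ⟨x, y⟩ hxy
  simp only [A, Set.mem_compl_iff, Set.mem_ofPred_eq, not_le, Set.mem_preimage,
    Prod.map_apply] at hxy ⊢
  linarith

/-- Key pairwise inequality behind Theorem 5.2 (symmetric distributions): if
`u * b ≥ v * a`, SAM orders the pair correctly with probability at least `1/2`. -/
theorem stmt_10 {Ω : Type*} [MeasurableSpace Ω] (ℙ : Measure Ω) [IsProbabilityMeasure ℙ]
    (X Y : Ω → ℝ) (hX : Measurable X) (hY : Measurable Y)
    (hindep : ProbabilityTheory.IndepFun X Y ℙ)
    (f g : ℝ → ℝ) (hf : HasDensity ℙ X f) (hg : HasDensity ℙ Y g)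
    (hf0 : VanishesAEOn f (Set.Iio 0)) (hg0 : VanishesAEOn g (Set.Iio 0))
    (a b : ℝ) (ha : 0 < a) (hb : 0 < b)
    (hfsym : ∀ t : ℝ, f (a - t) = f (a + t))
    (hgsym : ∀ t : ℝ, g (b - t) = g (b + t))
    (u v : ℝ) (hu : 0 < u) (hv : 0 < v) (huv : u * b ≥ v * a) :
    1 / 2 ≤ ℙ {ω | v * X ω ≤ u * Y ω} :=
  stmt_10_general ℙ X Y hX hY hindep f g hf hg a b hfsym hgsym u v huv
end

section
/- Let Z₁ and Z₂ be independent random variables on a probability space (Ω, ℙ) that both have the same density g, where g vanishes almost everywhere on (-∞, 0). Then for every real r ≥ 1, ℙ {ω | Z₁ ω ≤ r * Z₂ ω} ≥ 1/2. (Key pairwise inequality behind Theorem 5.4: for shape-uniform processing time distributions f_j(x) = λ_j g(λ_j x), SAM schedules any pair of jobs with w_j λ_j ≥ w_k λ_k in the correct order with probability at least 1/2; here r = (w_j λ_j)/(w_k λ_k).) -/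
open MeasureTheory

/-!
The event `{Z₁ ≤ Z₂}` has probability at least `1/2`: the pair `(Z₁, Z₂)` has the exchangeable
law `μ ⊗ μ`, so `{Z₁ ≤ Z₂}` and `{Z₂ ≤ Z₁}` are equally likely, and together they cover `Ω`.
Since `g` vanishes on the negative half-line, `Z₂ ≥ 0` almost surely, hence for `r ≥ 1` the event
`{Z₁ ≤ r Z₂}` contains `{Z₁ ≤ Z₂}` up to a null set.
-/

open scoped ENNReal

namespace MeasureTheory.Measure

variable {α : Type*} [MeasurableSpace α]

theorem prod_self_setOf_swap_le [LE α] (μ : Measure α) [SFinite μ] :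
    μ.prod μ {p | p.2 ≤ p.1} = μ.prod μ {p | p.1 ≤ p.2} :=
  (measurePreserving_swap (μ := μ) (ν := μ)).measure_preimage_emb
    MeasurableEquiv.prodComm.measurableEmbedding {p | p.1 ≤ p.2}

theorem half_le_prod_self_setOf_le [LinearOrder α] (μ : Measure α) [IsProbabilityMeasure μ] :
    1 / 2 ≤ μ.prod μ {p | p.1 ≤ p.2} := by
  have hcover : (1 : ℝ≥0∞) ≤ μ.prod μ {p | p.1 ≤ p.2} + μ.prod μ {p | p.2 ≤ p.1} :=
    calc (1 : ℝ≥0∞) = μ.prod μ Set.univ := measure_univ.symm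
      _ ≤ μ.prod μ ({p | p.1 ≤ p.2} ∪ {p | p.2 ≤ p.1}) :=
          measure_mono fun p _ ↦ le_total p.1 p.2
      _ ≤ _ := measure_union_le _ _
  rw [prod_self_setOf_swap_le, ← two_mul] at hcover
  rw [ENNReal.div_le_iff_le_mul (by norm_num) (by norm_num), mul_comm]
  exact hcover

end MeasureTheory.Measure

theorem ProbabilityTheory.IndepFun.half_le_measure_le {Ω α : Type*} [MeasurableSpace Ω]
    [MeasurableSpace α] [TopologicalSpace α] [LinearOrder α] [OrderClosedTopology α]
    [SecondCountableTopology α] [OpensMeasurableSpace α]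
    {μ : Measure Ω} [IsProbabilityMeasure μ] {X Y : Ω → α}
    (hX : AEMeasurable X μ) (hY : AEMeasurable Y μ) (hXY : IndepFun X Y μ)
    (hlaw : μ.map X = μ.map Y) :
    1 / 2 ≤ μ {ω | X ω ≤ Y ω} := by
  have : IsProbabilityMeasure (μ.map X) := Measure.isProbabilityMeasure_map hX
  have hjoint : μ.map (fun ω ↦ (X ω, Y ω)) = (μ.map X).prod (μ.map X) := by
    rw [(indepFun_iff_map_prod_eq_prod_map_map hX hY).mp hXY, hlaw]
  calc 1 / 2 ≤ (μ.map X).prod (μ.map X) {p | p.1 ≤ p.2} := Measure.half_le_prod_self_setOf_le _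
    _ = μ {ω | X ω ≤ Y ω} := by
      rw [← hjoint, Measure.map_apply_of_aemeasurable (hX.prodMk hY) measurableSet_le']
      rfl

theorem HasDensity.ae_notMem {Ω : Type*} [MeasurableSpace Ω] {μ : Measure Ω} {X : Ω → ℝ}
    {f : ℝ → ℝ} {s : Set ℝ} (hf : HasDensity μ X f) (hX : AEMeasurable X μ)
    (hs : MeasurableSet s) (hfs : VanishesAEOn f s) :
    ∀ᵐ ω ∂μ, X ω ∉ s := by
  refine ae_of_ae_map hX (measure_eq_zero_iff_ae_notMem.mp ?_)
  rw [hf.2.2.2, withDensity_apply _ hs]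
  calc ∫⁻ x in s, ENNReal.ofReal (f x) = ∫⁻ _ in s, 0 :=
        lintegral_congr_ae (hfs.mono fun x hx ↦ by simp [hx])
    _ = 0 := lintegral_zero

/-- Key pairwise inequality behind Theorem 5.4 (shape-uniform distributions). -/
theorem stmt_11 {Ω : Type*} [MeasurableSpace Ω] (ℙ : Measure Ω) [IsProbabilityMeasure ℙ]
    (Z₁ Z₂ : Ω → ℝ) (hZ₁ : Measurable Z₁) (hZ₂ : Measurable Z₂)
    (hindep : ProbabilityTheory.IndepFun Z₁ Z₂ ℙ)
    (g : ℝ → ℝ) (hg₁ : HasDensity ℙ Z₁ g) (hg₂ : HasDensity ℙ Z₂ g)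
    (hg0 : VanishesAEOn g (Set.Iio 0))
    (r : ℝ) (hr : 1 ≤ r) :
    1 / 2 ≤ ℙ {ω | Z₁ ω ≤ r * Z₂ ω} := by
  have hZ₂_nonneg : ∀ᵐ ω ∂ℙ, 0 ≤ Z₂ ω := by
    filter_upwards [hg₂.ae_notMem hZ₂.aemeasurable measurableSet_Iio hg0] with ω hω
    simpa [not_lt] using hω
  calc 1 / 2 ≤ ℙ {ω | Z₁ ω ≤ Z₂ ω} :=
        hindep.half_le_measure_le hZ₁.aemeasurable hZ₂.aemeasurable
          (hg₁.2.2.2.trans hg₂.2.2.2.symm)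
    _ ≤ ℙ {ω | Z₁ ω ≤ r * Z₂ ω} := measure_mono_ae <| by
        filter_upwards [hZ₂_nonneg] with ω hω hle
        exact hle.trans (le_mul_of_one_le_left hω hr)
end

section
/- Let Z₁ and Z₂ be independent random variables on a probability space (Ω, ℙ) that both have the same density g, where g vanishes almost everywhere on (-∞, 0). Then for every real r ≥ 1, ℙ {ω | Z₁ ω ≤ r * Z₂ ω} - ℙ {ω | r * Z₂ ω ≤ Z₁ ω} = ∫ y in Set.Ioi (0:ℝ), g y * (∫ x in Set.Icc (y / r) (r * y), g x). (The integral identity from the proof of Theorem 5.4.) -/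
open MeasureTheory

/-!
The joint law of `(Z₁, Z₂)` is `μ ⊗ μ` with `μ = g · volume`, so by Fubini both probabilities are
`μ`-integrals of the distribution function `F t = μ (Iic t)`, evaluated at `r * y` and at `y / r`.
For `y > 0` the difference `F (r * y) - F (y / r)` is `μ (Ioc (y / r) (r * y)) = ∫_{[y/r, ry]} g`,
and only `y > 0` matters because `μ` lives on `(0, ∞)`.
-/

open Set

section Density

variable {α : Type*} [MeasurableSpace α] {μ : Measure α} {f : α → ℝ}

lemma withDensity_ofReal_real_apply {s : Set α} (hs : MeasurableSet s) (hf : IntegrableOn f s μ)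
    (hf_nonneg : 0 ≤ᵐ[μ.restrict s] f) :
    (μ.withDensity fun x => ENNReal.ofReal (f x)).real s = ∫ x in s, f x ∂μ := by
  rw [measureReal_def, withDensity_apply _ hs, ← ofReal_integral_eq_lintegral_ofReal hf hf_nonneg,
    ENNReal.toReal_ofReal (integral_nonneg_of_ae hf_nonneg)]

lemma integral_withDensity_ofReal (hf : Measurable f) (hf_nonneg : ∀ x, 0 ≤ f x) (φ : α → ℝ) :
    ∫ x, φ x ∂(μ.withDensity fun x => ENNReal.ofReal (f x)) = ∫ x, f x * φ x ∂μ := by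
  rw [integral_withDensity_eq_integral_toReal_smul hf.ennreal_ofReal (ae_of_all _ fun _ => by simp)]
  simp only [ENNReal.toReal_ofReal (hf_nonneg _), smul_eq_mul]

end Density

lemma withDensity_ofReal_eq_restrict_Ioi {g : ℝ → ℝ} (hg0 : VanishesAEOn g (Iio 0)) :
    volume.withDensity (fun x => ENNReal.ofReal (g x))
      = (volume.restrict (Ioi 0)).withDensity fun x => ENNReal.ofReal (g x) := by
  rw [← withDensity_indicator measurableSet_Ioi]
  refine withDensity_congr_ae ?_
  have hg0' : ∀ᵐ x ∂volume, x ∈ Iic (0 : ℝ) → g x = 0 := by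
    rw [← ae_restrict_iff' measurableSet_Iic, ← Measure.restrict_congr_set Iio_ae_eq_Iic]
    exact hg0
  filter_upwards [hg0'] with x hx
  by_cases h : 0 < x
  · simp [h]
  · simp [h, hx (not_lt.1 h)]

lemma integral_withDensity_ofReal_of_vanishesAEOn_Iio {g : ℝ → ℝ} (hg : Measurable g)
    (hg_nonneg : ∀ x, 0 ≤ g x) (hg0 : VanishesAEOn g (Iio 0)) (φ : ℝ → ℝ) :
    ∫ x, φ x ∂(volume.withDensity fun x => ENNReal.ofReal (g x)) = ∫ x in Ioi 0, g x * φ x := by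
  rw [withDensity_ofReal_eq_restrict_Ioi hg0, integral_withDensity_ofReal hg hg_nonneg]

lemma measureReal_Iic_sub_measureReal_Iic (μ : Measure ℝ) [IsFiniteMeasure μ] {a b : ℝ}
    (hab : a ≤ b) : μ.real (Iic b) - μ.real (Iic a) = μ.real (Ioc a b) := by
  rw [← Iic_sdiff_Iic, measureReal_sdiff (Iic_subset_Iic.2 hab) measurableSet_Iic]

lemma integrable_measureReal_Iic_comp (μ ν : Measure ℝ) [IsFiniteMeasure μ] [IsFiniteMeasure ν]
    {f : ℝ → ℝ} (hf : Measurable f) : Integrable (fun y => μ.real (Iic (f y))) ν := by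
  have hmono : Monotone fun t => μ.real (Iic t) := fun a b hab =>
    measureReal_mono (Iic_subset_Iic.2 hab)
  refine Integrable.of_bound (hmono.measurable.comp hf).aestronglyMeasurable (μ.real univ)
    (ae_of_all _ fun y => ?_)
  rw [Real.norm_of_nonneg measureReal_nonneg]
  exact measureReal_mono (subset_univ _)

lemma ProbabilityTheory.IndepFun.measureReal_le_comp {Ω : Type*} [MeasurableSpace Ω]
    {μ : Measure Ω} [IsFiniteMeasure μ] {X Y : Ω → ℝ} (hX : Measurable X) (hY : Measurable Y)
    (hXY : IndepFun X Y μ) {f : ℝ → ℝ} (hf : Measurable f) :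
    μ.real {ω | X ω ≤ f (Y ω)} = ∫ y, (μ.map X).real (Iic (f y)) ∂(μ.map Y) := by
  have hs : MeasurableSet {p : ℝ × ℝ | p.1 ≤ f p.2} :=
    measurableSet_le measurable_fst (hf.comp measurable_snd)
  have hmono : Monotone fun t => μ.map X (Iic t) := fun a b hab =>
    measure_mono (Iic_subset_Iic.2 hab)
  calc μ.real {ω | X ω ≤ f (Y ω)}
      = ((μ.map X).prod (μ.map Y)).real {p | p.1 ≤ f p.2} := by
        rw [← (indepFun_iff_map_prod_eq_prod_map_map hX.aemeasurable hY.aemeasurable).1 hXY,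
          map_measureReal_apply (hX.prodMk hY) hs]
        rfl
    _ = ∫ y, (μ.map X).real (Iic (f y)) ∂(μ.map Y) := by
        rw [measureReal_def, Measure.prod_apply_symm hs]
        exact (integral_toReal (hmono.measurable.comp hf).aemeasurable
          (ae_of_all _ fun _ => measure_lt_top _ _)).symm

/-- The integral identity from the proof of Theorem 5.4. -/
theorem stmt_12 {Ω : Type*} [MeasurableSpace Ω] (ℙ : Measure Ω) [IsProbabilityMeasure ℙ]
    (Z₁ Z₂ : Ω → ℝ) (hZ₁ : Measurable Z₁) (hZ₂ : Measurable Z₂)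
    (hindep : ProbabilityTheory.IndepFun Z₁ Z₂ ℙ)
    (g : ℝ → ℝ) (hg₁ : HasDensity ℙ Z₁ g) (hg₂ : HasDensity ℙ Z₂ g)
    (hg0 : VanishesAEOn g (Set.Iio 0))
    (r : ℝ) (hr : 1 ≤ r) :
    (ℙ {ω | Z₁ ω ≤ r * Z₂ ω}).toReal - (ℙ {ω | r * Z₂ ω ≤ Z₁ ω}).toReal
      = ∫ y in Set.Ioi (0:ℝ), g y * ∫ x in Set.Icc (y / r) (r * y), g x := by
  obtain ⟨hg_nonneg, hg_meas, hg_int, hlaw₁⟩ := hg₁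
  obtain ⟨-, -, -, hlaw₂⟩ := hg₂
  set μ := volume.withDensity fun x => ENNReal.ofReal (g x)
  have : IsProbabilityMeasure μ := hlaw₁ ▸ Measure.isProbabilityMeasure_map hZ₁.aemeasurable
  have hr0 : 0 < r := by linarith
  have hle : ℙ.real {ω | Z₁ ω ≤ r * Z₂ ω} = ∫ y, μ.real (Iic (r * y)) ∂μ := by
    rw [hindep.measureReal_le_comp hZ₁ hZ₂ (measurable_const_mul r), hlaw₁, hlaw₂]
  have hge : ℙ.real {ω | r * Z₂ ω ≤ Z₁ ω} = ∫ y, μ.real (Iic (y / r)) ∂μ := by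
    simp_rw [← le_div_iff₀' hr0]
    rw [hindep.symm.measureReal_le_comp hZ₂ hZ₁ (measurable_div_const r), hlaw₁, hlaw₂]
  have hg_integrable : Integrable g := Integrable.of_integral_ne_zero (by simp [hg_int])
  calc (ℙ {ω | Z₁ ω ≤ r * Z₂ ω}).toReal - (ℙ {ω | r * Z₂ ω ≤ Z₁ ω}).toReal
      = ∫ y, (μ.real (Iic (r * y)) - μ.real (Iic (y / r))) ∂μ := by
        rw [← measureReal_def, ← measureReal_def, hle, hge, integral_sub
          (integrable_measureReal_Iic_comp μ μ (measurable_const_mul r))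
          (integrable_measureReal_Iic_comp μ μ (measurable_div_const r))]
    _ = ∫ y in Ioi 0, g y * (μ.real (Iic (r * y)) - μ.real (Iic (y / r))) :=
        integral_withDensity_ofReal_of_vanishesAEOn_Iio hg_meas hg_nonneg hg0 _
    _ = ∫ y in Ioi 0, g y * ∫ x in Icc (y / r) (r * y), g x := by
        refine setIntegral_congr_fun measurableSet_Ioi fun y (hy : 0 < y) => ?_
        have hyr : y / r ≤ r * y := (div_le_self hy.le hr).trans (le_mul_of_one_le_left hy.le hr)
        rw [measureReal_Iic_sub_measureReal_Iic μ hyr, integral_Icc_eq_integral_Ioc,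
          withDensity_ofReal_real_apply measurableSet_Ioc hg_integrable.integrableOn
            (ae_of_all _ hg_nonneg)]
end

section
/- Let Z₁ and Z₂ be independent random variables on a probability space (Ω, ℙ) that both have the same density g, where g vanishes almost everywhere on (-∞, 0). Then for every real a ≥ 0, ℙ {ω | Z₁ ω ≤ Z₂ ω + a} - ℙ {ω | Z₂ ω + a ≤ Z₁ ω} = ∫ y in Set.Ioi (0:ℝ), g y * (∫ x in Set.Icc (y - a) (y + a), g x). (The integral identity from the proof of Theorem 5.6.) -/
open MeasureTheory

/-!
Let `μ` be the common law of `Z₁` and `Z₂`. By independence, conditioning on `Z₂ = y` turns the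
two probabilities into `∫ μ(-∞, y + a] dμ(y)` and `∫ μ(-∞, y - a] dμ(y)`. Since `μ` has no atoms,
the integrands differ by `μ[y - a, y + a] = ∫_{[y-a, y+a]} g`, so the difference of probabilities
is `∫ g(y) ∫_{[y-a, y+a]} g dy`, and the part of this integral over `y ≤ 0` vanishes with `g`.
-/

open Set

theorem ProbabilityTheory.IndepFun.measure_preimage_prodMk_eq_prod {Ω α β : Type*}
    [MeasurableSpace Ω] [MeasurableSpace α] [MeasurableSpace β] {P : Measure Ω}
    [IsFiniteMeasure P] {X : Ω → α} {Y : Ω → β} (hX : Measurable X) (hY : Measurable Y)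
    (hXY : IndepFun X Y P) {s : Set (α × β)} (hs : MeasurableSet s) :
    P ((fun ω => (X ω, Y ω)) ⁻¹' s) = ((P.map X).prod (P.map Y)) s := by
  rw [← hXY.map_prod_eq_prod_map_map hX.aemeasurable hY.aemeasurable,
    Measure.map_apply (hX.prodMk hY) hs]

theorem measure_Iic_eq_measure_Iic_add_measure_Icc {α : Type*} [LinearOrder α]
    [TopologicalSpace α] [OrderClosedTopology α] [MeasurableSpace α] [OpensMeasurableSpace α]
    {μ : Measure α} [NullSingletonClass μ] {b c : α} (hbc : b ≤ c) :
    μ (Iic c) = μ (Iic b) + μ (Icc b c) := by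
  rw [← Iio_union_Icc_eq_Iic hbc, measure_union
    ((Iio_disjoint_Ici le_rfl).mono_right Icc_subset_Ici_self) measurableSet_Icc,
    measure_congr Iio_ae_eq_Iic]

theorem measurable_measure_Icc_sub_add {μ : Measure ℝ} [SFinite μ] (a : ℝ) :
    Measurable fun y => μ (Icc (y - a) (y + a)) :=
  measurable_measure_prodMk_left (ν := μ) (s := {p : ℝ × ℝ | p.2 ∈ Icc (p.1 - a) (p.1 + a)})
    ((measurableSet_le (measurable_fst.sub_const a) measurable_snd).inter
      (measurableSet_le measurable_snd (measurable_fst.add_const a)))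

namespace MeasureTheory.Measure

variable {μ : Measure ℝ}

theorem prod_setOf_fst_le_snd_add (ν : Measure ℝ) [SFinite μ] [SFinite ν] (a : ℝ) :
    (ν.prod μ) {p | p.1 ≤ p.2 + a} = ∫⁻ y, ν (Iic (y + a)) ∂μ :=
  prod_apply_symm (measurableSet_le measurable_fst (measurable_snd.add_const a))

theorem prod_setOf_snd_add_le_fst (ν : Measure ℝ) [SFinite ν] (a : ℝ) :
    (μ.prod ν) {p | p.2 + a ≤ p.1} = ∫⁻ x, ν (Iic (x - a)) ∂μ := by
  rw [prod_apply (measurableSet_le (measurable_snd.add_const a) measurable_fst)]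
  simp_rw [← le_sub_iff_add_le]
  rfl

theorem prod_setOf_fst_le_snd_add_eq [SFinite μ] [NullSingletonClass μ] {a : ℝ} (ha : 0 ≤ a) :
    (μ.prod μ) {p | p.1 ≤ p.2 + a}
      = (μ.prod μ) {p | p.2 + a ≤ p.1} + ∫⁻ y, μ (Icc (y - a) (y + a)) ∂μ := by
  rw [prod_setOf_fst_le_snd_add, prod_setOf_snd_add_le_fst,
    ← lintegral_add_right _ (measurable_measure_Icc_sub_add a)]
  exact lintegral_congr fun y => measure_Iic_eq_measure_Iic_add_measure_Icc (by linarith)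

end MeasureTheory.Measure

section WithDensity

variable {α : Type*} [MeasurableSpace α] {ν : Measure α} {g : α → ℝ}

theorem toReal_withDensity_ofReal_apply (hg : ∀ x, 0 ≤ g x) (hgm : Measurable g) {s : Set α}
    (hs : MeasurableSet s) :
    (ν.withDensity (fun x => ENNReal.ofReal (g x)) s).toReal = ∫ x in s, g x ∂ν := by
  rw [withDensity_apply _ hs, integral_eq_lintegral_of_nonneg_ae
    (Filter.Eventually.of_forall hg) hgm.aestronglyMeasurable.restrict]

theorem toReal_lintegral_withDensity_ofReal (hg : ∀ x, 0 ≤ g x) (hgm : Measurable g)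
    {f : α → ENNReal} (hf : Measurable f) (hf_top : ∀ x, f x ≠ ⊤) :
    (∫⁻ x, f x ∂ν.withDensity (fun x => ENNReal.ofReal (g x))).toReal
      = ∫ x, g x * (f x).toReal ∂ν := by
  rw [← integral_toReal hf.aemeasurable (Filter.Eventually.of_forall fun x => (hf_top x).lt_top),
    integral_withDensity_eq_integral_toReal_smul hgm.ennreal_ofReal
      (Filter.Eventually.of_forall fun _ => ENNReal.ofReal_lt_top)]
  simp_rw [ENNReal.toReal_ofReal (hg _), smul_eq_mul]

end WithDensity

theorem VanishesAEOn.setIntegral_Ioi_mul_eq_integral {g : ℝ → ℝ} (hg : VanishesAEOn g (Iio 0))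
    (h : ℝ → ℝ) : ∫ y in Ioi 0, g y * h y = ∫ y, g y * h y := by
  refine setIntegral_eq_integral_of_ae_compl_eq_zero ?_
  have hg' : ∀ᵐ y ∂volume.restrict (Iic 0), g y = 0 := by
    rwa [VanishesAEOn, Measure.restrict_congr_set Iio_ae_eq_Iic] at hg
  filter_upwards [(ae_restrict_iff' measurableSet_Iic).1 hg'] with y hy hy0
  rw [hy (mem_Iic.2 (not_lt.1 hy0)), zero_mul]

/-- The integral identity from the proof of Theorem 5.6. -/
theorem stmt_14 {Ω : Type*} [MeasurableSpace Ω] (ℙ : Measure Ω) [IsProbabilityMeasure ℙ]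
    (Z₁ Z₂ : Ω → ℝ) (hZ₁ : Measurable Z₁) (hZ₂ : Measurable Z₂)
    (hindep : ProbabilityTheory.IndepFun Z₁ Z₂ ℙ)
    (g : ℝ → ℝ) (hg₁ : HasDensity ℙ Z₁ g) (hg₂ : HasDensity ℙ Z₂ g)
    (hg0 : VanishesAEOn g (Set.Iio 0))
    (a : ℝ) (ha : 0 ≤ a) :
    (ℙ {ω | Z₁ ω ≤ Z₂ ω + a}).toReal - (ℙ {ω | Z₂ ω + a ≤ Z₁ ω}).toReal
      = ∫ y in Set.Ioi (0:ℝ), g y * ∫ x in Set.Icc (y - a) (y + a), g x := by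
  obtain ⟨hg_nn, hg_meas, -, hlaw₁⟩ := hg₁
  set μ := volume.withDensity fun x => ENNReal.ofReal (g x)
  have : IsProbabilityMeasure μ := hlaw₁ ▸ Measure.isProbabilityMeasure_map hZ₁.aemeasurable
  have : NullSingletonClass μ :=
    ⟨fun x => withDensity_absolutelyContinuous _ _ (measure_singleton x)⟩
  have hjoint {s : Set (ℝ × ℝ)} (hs : MeasurableSet s) :
      ℙ ((fun ω => (Z₁ ω, Z₂ ω)) ⁻¹' s) = (μ.prod μ) s := by
    rw [hindep.measure_preimage_prodMk_eq_prod hZ₁ hZ₂ hs, hlaw₁, hg₂.2.2.2]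
  have hle : ℙ {ω | Z₁ ω ≤ Z₂ ω + a} = (μ.prod μ) {p | p.1 ≤ p.2 + a} :=
    hjoint (measurableSet_le measurable_fst (measurable_snd.add_const a))
  have hge : ℙ {ω | Z₂ ω + a ≤ Z₁ ω} = (μ.prod μ) {p | p.2 + a ≤ p.1} :=
    hjoint (measurableSet_le (measurable_snd.add_const a) measurable_fst)
  have hsplit : ℙ {ω | Z₁ ω ≤ Z₂ ω + a}
      = ℙ {ω | Z₂ ω + a ≤ Z₁ ω} + ∫⁻ y, μ (Icc (y - a) (y + a)) ∂μ := by
    rw [hle, hge, Measure.prod_setOf_fst_le_snd_add_eq ha]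
  have hfin := ENNReal.add_ne_top.1 (hsplit ▸ measure_ne_top ℙ _)
  rw [hsplit, ENNReal.toReal_add hfin.1 hfin.2, add_sub_cancel_left,
    toReal_lintegral_withDensity_ofReal hg_nn hg_meas (measurable_measure_Icc_sub_add a)
      fun _ => measure_ne_top _ _, hg0.setIntegral_Ioi_mul_eq_integral]
  simp_rw [μ, toReal_withDensity_ofReal_apply hg_nn hg_meas measurableSet_Icc]
end

section
/- Consider n jobs with weights w : Fin n → ℝ, 0 < w j, and exponential rates λ : Fin n → ℝ, 0 < λ j, so that the mean processing times are E j := 1 / λ j, and let the priorities be π j := w j * λ j. Assume the priorities are sorted nonincreasingly (π j ≥ π k whenever j ≤ k) and are α-separated for some α ≥ 1: for all j, k, either π j = π k, or π j ≥ α * π k, or π k ≥ α * π j. Let μ be a randomized schedule whose pairwise marginals match SAM on exponential inputs, i.e. P_μ(j→k) = π j / (π j + π k) for all j ≠ k. Then cost μ - cost id ≤ (cost rev - cost id) / (1 + α), where cost is computed with mean processing times E j = 1 / λ j. (Theorem 5.9: for exponentially distributed processing times with α-separated priorities, SAM has relative optimality gap at most 1/(1+α).) -/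
/-!
Write both the randomized and the deterministic costs as `∑ j, w j * E j` plus pairwise terms
`w j * E k * [k precedes j]`. For a pair `j < k` the excess of SAM over the identity order is
`(π j - π k) / (λ j * λ k) * π k / (π j + π k)`, while that of the reversed order is
`(π j - π k) / (λ j * λ k)`. Separation makes the ratio `π k / (π j + π k)` at most `1 / (1 + α)`
unless `π j = π k`, in which case both excesses vanish.
-/

open Finset Nat

theorem Finset.sum_sum_le_of_add_swap_le {ι R : Type*} [Fintype ι] [LinearOrder ι]
    [Field R] [LinearOrder R] [IsStrictOrderedRing R] {f g : ι → ι → R}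
    (hdiag : ∀ j, f j j ≤ g j j) (hpair : ∀ j k, j < k → f j k + f k j ≤ g j k + g k j) :
    ∑ j, ∑ k, f j k ≤ ∑ j, ∑ k, g j k := by
  have hswap : ∀ j k, f j k + f k j ≤ g j k + g k j := fun j k ↦ by
    rcases lt_trichotomy j k with h | rfl | h
    · exact hpair j k h
    · linarith [hdiag j]
    · linarith [hpair k j h]
  have hsymm : ∀ h : ι → ι → R, ∑ j, ∑ k, (h j k + h k j) = 2 * ∑ j, ∑ k, h j k := fun h ↦ by
    simp only [sum_add_distrib]
    rw [sum_comm (f := fun j k ↦ h k j)]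
    ring
  have := sum_le_sum fun j (_ : j ∈ univ) ↦ sum_le_sum fun k (_ : k ∈ univ) ↦ hswap j k
  rw [hsymm f, hsymm g] at this
  linarith

section Costs

variable {n : ℕ} (w E : Fin n → ℝ)

theorem cost_eq_sum_add_sum_sum (σ : Equiv.Perm (Fin n)) :
    cost w E σ = ∑ j, w j * E j + ∑ j, ∑ k, w j * E k * if σ k < σ j then 1 else 0 := by
  rw [cost, ← sum_add_distrib]
  refine sum_congr rfl fun j _ ↦ ?_
  have hle : univ.filter (fun k ↦ σ k ≤ σ j) = insert j (univ.filter fun k ↦ σ k < σ j) := by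
    ext k
    simp only [mem_filter, mem_insert, mem_univ, true_and, le_iff_lt_or_eq, σ.injective.eq_iff]
    tauto
  simp only [hle, sum_insert (by simp : j ∉ univ.filter fun k ↦ σ k < σ j), mul_add, mul_sum,
    sum_filter, mul_ite, mul_one, mul_zero]

theorem rcost_eq_sum_add_sum_sum {μ : Equiv.Perm (Fin n) → ℝ} (hμ1 : ∑ σ, μ σ = 1) :
    rcost w E μ = ∑ j, w j * E j + ∑ j, ∑ k, w j * E k * Pbefore μ k j := by
  simp only [rcost, cost_eq_sum_add_sum_sum, mul_add, sum_add_distrib]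
  rw [← sum_mul, hμ1, one_mul]
  congr 1
  simp only [Pbefore, sum_filter, mul_sum]
  rw [sum_comm]
  refine sum_congr rfl fun j _ ↦ ?_
  rw [sum_comm]
  refine sum_congr rfl fun k _ ↦ sum_congr rfl fun σ _ ↦ ?_
  split_ifs <;> ring

theorem rcost_sub_cost_refl {μ : Equiv.Perm (Fin n) → ℝ} (hμ1 : ∑ σ, μ σ = 1) :
    rcost w E μ - cost w E (Equiv.refl _)
      = ∑ j, ∑ k, w j * E k * (Pbefore μ k j - if k < j then 1 else 0) := by
  simp only [rcost_eq_sum_add_sum_sum w E hμ1, cost_eq_sum_add_sum_sum, Equiv.refl_apply,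
    add_sub_add_left_eq_sub, ← sum_sub_distrib, ← mul_sub]
  rfl

theorem cost_revPerm_sub_cost_refl :
    cost w E Fin.revPerm - cost w E (Equiv.refl _)
      = ∑ j, ∑ k, w j * E k * ((if j < k then 1 else 0) - if k < j then 1 else 0) := by
  simp only [cost_eq_sum_add_sum_sum, Equiv.refl_apply, Fin.revPerm_apply, Fin.rev_lt_rev,
    add_sub_add_left_eq_sub, ← sum_sub_distrib, ← mul_sub]
  rfl

end Costs

theorem Pbefore_self {n : ℕ} (μ : Equiv.Perm (Fin n) → ℝ) (j : Fin n) : Pbefore μ j j = 0 := by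
  simp [Pbefore]

theorem sub_mul_div_add_le_sub_div_one_add {a b α : ℝ} (hb : 0 < b) (hba : b ≤ a)
    (hα : 0 < 1 + α) (hsep : a = b ∨ α * b ≤ a) :
    (a - b) * (b / (a + b)) ≤ (a - b) / (1 + α) := by
  rcases hsep with rfl | hsep
  · simp
  rw [div_eq_mul_one_div (a - b)]
  refine mul_le_mul_of_nonneg_left ?_ (sub_nonneg.mpr hba)
  rw [div_le_div_iff₀ (by linarith) hα]
  linarith

/-- For jobs `j < k` with weights `wj, wk` and rates `lj, lk`: the left side is the pair's
contribution to `rcost - cost id` under SAM's marginals, the right side its contribution to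
`(cost rev - cost id) / (1 + α)`. -/
theorem exponential_pair_excess_le {wj wk lj lk α : ℝ} (hwj : 0 < wj) (hwk : 0 < wk)
    (hlj : 0 < lj) (hlk : 0 < lk) (hα : 0 < 1 + α) (hle : wk * lk ≤ wj * lj)
    (hsep : wj * lj = wk * lk ∨ α * (wk * lk) ≤ wj * lj) :
    wj * (1 / lk) * (wk * lk / (wk * lk + wj * lj))
        + wk * (1 / lj) * (wj * lj / (wj * lj + wk * lk) - 1)
      ≤ (wj * (1 / lk) - wk * (1 / lj)) / (1 + α) := by
  have hS : 0 < wj * lj + wk * lk := by positivity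
  calc _ = (wj * lj - wk * lk) * (wk * lk / (wj * lj + wk * lk)) / (lj * lk) := by
          field_simp; ring
    _ ≤ (wj * lj - wk * lk) / (1 + α) / (lj * lk) := by
          gcongr
          exact sub_mul_div_add_le_sub_div_one_add (by positivity) hle hα hsep
    _ = _ := by field_simp

theorem stmt_16_general (n : ℕ) (w lam : Fin n → ℝ)
    (hw : ∀ j, 0 < w j) (hlam : ∀ j, 0 < lam j)
    (E : Fin n → ℝ) (hE : ∀ j, E j = 1 / lam j)
    (π : Fin n → ℝ) (hπ : ∀ j, π j = w j * lam j)
    (α : ℝ) (hα : 1 ≤ α)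
    (hsorted : ∀ j k : Fin n, j ≤ k → π j ≥ π k)
    (hsep : ∀ j k : Fin n, π j = π k ∨ π j ≥ α * π k ∨ π k ≥ α * π j)
    (μ : Equiv.Perm (Fin n) → ℝ)
    (hμ1 : ∑ σ, μ σ = 1)
    (hmarg : ∀ j k : Fin n, j ≠ k → Pbefore μ j k = π j / (π j + π k)) :
    rcost w E μ - cost w E (Equiv.refl (Fin n))
      ≤ (cost w E (Fin.revPerm : Equiv.Perm (Fin n))
          - cost w E (Equiv.refl (Fin n))) / (1 + α) := by
  rw [rcost_sub_cost_refl w E hμ1, cost_revPerm_sub_cost_refl]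
  simp only [sum_div]
  refine sum_sum_le_of_add_swap_le (fun j ↦ by simp [Pbefore_self]) fun j k hjk ↦ ?_
  have hπpos : ∀ j, 0 < π j := fun j ↦ hπ j ▸ mul_pos (hw j) (hlam j)
  -- a third alternative `α * π j ≤ π k` collapses to `π j = π k`, since `π k ≤ π j ≤ α * π j`
  have hsep' : π j = π k ∨ α * π k ≤ π j := by
    rcases hsep j k with h | h | h
    exacts [.inl h, .inr h, .inl (by nlinarith [hsorted j k hjk.le, hπpos j])]
  rw [hmarg k j hjk.ne', hmarg j k hjk.ne]
  simp only [if_pos hjk, if_neg hjk.not_gt, hE, hπ, sub_zero] at hsep' ⊢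
  refine (exponential_pair_excess_le (hw j) (hw k) (hlam j) (hlam k) (by linarith)
    (hπ j ▸ hπ k ▸ hsorted j k hjk.le) hsep').trans_eq ?_
  ring

/-- Theorem 5.9: for exponentially distributed processing times with `α`-separated
priorities `π j = w j * λ j`, a randomized schedule whose pairwise marginals match
SAM has relative optimality gap at most `1 / (1 + α)`. -/
theorem stmt_16 (n : ℕ) (hn : 1 ≤ n) (w lam : Fin n → ℝ)
    (hw : ∀ j, 0 < w j) (hlam : ∀ j, 0 < lam j)
    (E : Fin n → ℝ) (hE : ∀ j, E j = 1 / lam j)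
    (π : Fin n → ℝ) (hπ : ∀ j, π j = w j * lam j)
    (α : ℝ) (hα : 1 ≤ α)
    (hsorted : ∀ j k : Fin n, j ≤ k → π j ≥ π k)
    (hsep : ∀ j k : Fin n, π j = π k ∨ π j ≥ α * π k ∨ π k ≥ α * π j)
    (μ : Equiv.Perm (Fin n) → ℝ)
    (hμ0 : ∀ σ, 0 ≤ μ σ) (hμ1 : ∑ σ, μ σ = 1)
    (hmarg : ∀ j k : Fin n, j ≠ k → Pbefore μ j k = π j / (π j + π k)) :
    rcost w E μ - cost w E (Equiv.refl (Fin n))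
      ≤ (cost w E (Fin.revPerm : Equiv.Perm (Fin n))
          - cost w E (Equiv.refl (Fin n))) / (1 + α) :=
  stmt_16_general n w lam hw hlam E hE π hπ α hα hsorted hsep μ hμ1 hmarg
end
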